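/- arXiv:1603.01635 — 2 statements merged into one kernel-verified Lean document; each statement's English description precedes it below -/
import Mathlib

section
/- The uncompute transformation agrees with the full inverse on the complement of the removed set: if C is well-formed and controls(C) is disjoint from A, then for all states s, the states eval C s and eval (uncompute(C, A)) s agree on all indices not in A, where uncompute(C, A) removes from C every gate whose target lies in A (without reversing). -/
inductive BExp where
  | bfalse : BExp
  | btrue : BExp
  | var (i : ℕ) : BExp
  | bxor (a b : BExp) : BExp
  | band (a b : BExp) : BExp

def BExp.eval : BExp → (ℕ → Bool) → Bool
  | .bfalse, _ => false
  | .btrue, _ => true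
  | .var i, s => s i
  | .bxor a b, s => xor (a.eval s) (b.eval s)
  | .band a b, s => (a.eval s) && (b.eval s)

def BExp.vars : BExp → Finset ℕ
  | .bfalse => ∅
  | .btrue => ∅
  | .var i => {i}
  | .bxor a b => a.vars ∪ b.vars
  | .band a b => a.vars ∪ b.vars

inductive Gate where
  | NOT (i : ℕ) : Gate
  | CNOT (i j : ℕ) : Gate
  | TOF (i j k : ℕ) : Gate

def applyGate : Gate → (ℕ → Bool) → (ℕ → Bool)
  | .NOT i, s => Function.update s i (! s i)
  | .CNOT i j, s => Function.update s j (xor (s i) (s j))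
  | .TOF i j k, s => Function.update s k (xor (s i && s j) (s k))

def evalCirc : List Gate → (ℕ → Bool) → (ℕ → Bool)
  | [], s => s
  | g :: C, s => evalCirc C (applyGate g s)

def Gate.target : Gate → ℕ
  | .NOT i => i
  | .CNOT _ j => j
  | .TOF _ _ k => k

def Gate.controls : Gate → Finset ℕ
  | .NOT _ => ∅
  | .CNOT i _ => {i}
  | .TOF i j _ => {i, j}

def Gate.wf : Gate → Prop
  | .NOT _ => True
  | .CNOT i j => i ≠ j
  | .TOF i j k => i ≠ j ∧ i ≠ k ∧ j ≠ k

def circWf (C : List Gate) : Prop := ∀ g ∈ C, g.wf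

def mods (C : List Gate) : Finset ℕ := (C.map Gate.target).toFinset

def controls (C : List Gate) : Finset ℕ := C.foldr (fun g A => g.controls ∪ A) ∅

def uncompute (C : List Gate) (A : Finset ℕ) : List Gate :=
  C.filter (fun g => g.target ∉ A)

/-!
A gate whose target lies in `A` changes the state only inside `A`, and since no gate reads a
bit of `A`, the values outside `A` never depend on what is written there. Hence, gate by gate,
the runs of `C` and of `uncompute C A` keep agreeing outside `A`.
-/

open Set

lemma applyGate_of_ne_target {g : Gate} {j : ℕ} (hj : j ≠ g.target) (s : ℕ → Bool) :
    applyGate g s j = s j := by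
  cases g <;> exact Function.update_of_ne hj ..

lemma applyGate_eqOn {g : Gate} {S : Set ℕ} (hc : ↑g.controls ⊆ S) (ht : g.target ∈ S)
    {s t : ℕ → Bool} (h : EqOn s t S) : EqOn (applyGate g s) (applyGate g t) S := by
  intro j hj
  cases g with
  | NOT i => simp only [applyGate, Function.update_apply, h hj, @h i ht]
  | CNOT i k =>
    have hi : i ∈ S := hc (Finset.mem_singleton_self i)
    simp only [applyGate, Function.update_apply, h hj, @h k ht, h hi]
  | TOF i k l =>
    have hi : i ∈ S := hc (by simp [Gate.controls])
    have hk : k ∈ S := hc (by simp [Gate.controls])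
    simp only [applyGate, Function.update_apply, h hj, @h l ht, h hi, h hk]

lemma controls_cons (g : Gate) (C : List Gate) :
    controls (g :: C) = g.controls ∪ controls C := rfl

lemma evalCirc_eqOn_uncompute {C : List Gate} {A : Finset ℕ} (hA : Disjoint (controls C) A)
    {s t : ℕ → Bool} (h : EqOn s t (↑A)ᶜ) :
    EqOn (evalCirc C s) (evalCirc (uncompute C A) t) (↑A)ᶜ := by
  induction C generalizing s t with
  | nil => exact h
  | cons g C ih =>
    rw [controls_cons, Finset.disjoint_union_left] at hA
    by_cases hg : g.target ∈ A
    · rw [uncompute, List.filter_cons_of_neg (by simpa using hg)]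
      refine ih hA.2 fun j hj => ?_
      rw [applyGate_of_ne_target (ne_of_mem_of_not_mem hg hj).symm]
      exact h hj
    · rw [uncompute, List.filter_cons_of_pos (by simpa using hg)]
      exact ih hA.2 (applyGate_eqOn (Finset.disjoint_coe.mpr hA.1).subset_compl_right hg h)

theorem uncompute_agree_general (C : List Gate) (A : Finset ℕ)
    (hA : ∀ i ∈ A, i ∉ controls C) (s : ℕ → Bool) (i : ℕ) (hi : i ∉ A) :
    evalCirc C s i = evalCirc (uncompute C A) s i :=
  evalCirc_eqOn_uncompute (Finset.disjoint_right.mpr hA) (eqOn_refl s _) hi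

theorem uncompute_agree (C : List Gate) (A : Finset ℕ) (hC : circWf C)
    (hA : ∀ i ∈ A, i ∉ controls C) (s : ℕ → Bool) (i : ℕ) (hi : i ∉ A) :
    evalCirc C s i = evalCirc (uncompute C A) s i :=
  uncompute_agree_general C A hA s i hi
end

section
/- Compile-with-cleanup correctness: let C = compile(B, i) with ancilla heap H, where vars(B), H, {i} are pairwise disjoint and all heap bits are false in state s. Let C' = C ++ reverse(uncompute(C, {i})), where uncompute(C, {i}) removes gates targeting i. Then for every bit j ≠ i, (eval C' s)(j) = s(j); moreover (eval C' s)(i) = s(i) XOR eval B s, and all ancillas popped during compilation are restored to false. -/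
/-- The ancilla heap is modeled as an infinite supply of available (zero-valued)
ancilla indices: `H n` is the `n`-th ancilla on the heap.  Popping the heap
returns `H 0` and the remaining heap `fun n => H (n+1)`. -/
def compileBExp : BExp → ℕ → (ℕ → ℕ) → List Gate × (ℕ → ℕ)
  | .bfalse, _, H => ([], H)
  | .btrue, i, H => ([.NOT i], H)
  | .var j, i, H => ([.CNOT j i], H)
  | .bxor a b, i, H =>
    let r1 := compileBExp a i H
    let r2 := compileBExp b i r1.2
    (r1.1 ++ r2.1, r2.2)
  | .band a b, i, H =>
    let a1 := H 0
    let r1 := compileBExp a a1 (fun n => H (n+1))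
    let a2 := r1.2 0
    let r2 := compileBExp b a2 (fun n => r1.2 (n+1))
    (r1.1 ++ r2.1 ++ [.TOF a1 a2 i], r2.2)

/-!
Every gate of `compileBExp B i H` targets `i` or one of the first `B.numAncillas` heap cells and
is controlled only by variables of `B` and heap cells, so `i` is never a control. Hence dropping
the gates that target `i` does not change the computation away from `i`, and the reversed pruned
circuit, a product of involutions, undoes the compiled circuit everywhere except at `i`, which it
does not touch. The value left at `i` is the one computed by the compiled circuit, namely
`s i ^^ B.eval s`, by structural induction on `B` using that the heap cells start out `false`.
-/

theorem Function.Injective.comp_add_right {H : ℕ → ℕ} (hH : Function.Injective H) (k : ℕ) :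
    Function.Injective fun n => H (n + k) :=
  hH.comp (add_left_injective k)

theorem evalCirc_append (C D : List Gate) (s : ℕ → Bool) :
    evalCirc (C ++ D) s = evalCirc D (evalCirc C s) := by
  induction C generalizing s with
  | nil => rfl
  | cons g C ih => exact ih _

theorem applyGate_of_target_ne {g : Gate} {j : ℕ} (h : g.target ≠ j) (s : ℕ → Bool) :
    applyGate g s j = s j := by
  cases g <;> exact Function.update_of_ne (Ne.symm h) _ _

theorem evalCirc_of_forall_target_ne {C : List Gate} {j : ℕ} (h : ∀ g ∈ C, g.target ≠ j)
    (s : ℕ → Bool) : evalCirc C s j = s j := by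
  induction C generalizing s with
  | nil => rfl
  | cons g C ih =>
    rw [evalCirc, ih (fun g' hg' => h g' (List.mem_cons_of_mem _ hg')),
      applyGate_of_target_ne (h g List.mem_cons_self)]

theorem applyGate_applyGate {g : Gate} (hg : g.wf) (s : ℕ → Bool) :
    applyGate g (applyGate g s) = s := by
  funext j
  cases g with
  | NOT k => by_cases hj : j = k <;> simp_all [applyGate]
  | CNOT c k =>
    have hck : c ≠ k := hg
    by_cases hj : j = k <;> simp_all [applyGate]
  | TOF c d k =>
    obtain ⟨-, hck, hdk⟩ := hg
    by_cases hj : j = k <;> simp_all [applyGate]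

theorem evalCirc_reverse_evalCirc {C : List Gate} (hC : circWf C) (s : ℕ → Bool) :
    evalCirc C.reverse (evalCirc C s) = s := by
  induction C generalizing s with
  | nil => rfl
  | cons g C ih =>
    rw [List.reverse_cons, evalCirc_append, show evalCirc (g :: C) s = evalCirc C (applyGate g s)
      from rfl, ih (fun g' hg' => hC g' (List.mem_cons_of_mem _ hg'))]
    exact applyGate_applyGate (hC g List.mem_cons_self) s

theorem applyGate_congr_off {g : Gate} {A : Finset ℕ} (hg : Disjoint g.controls A)
    {s t : ℕ → Bool} (h : ∀ j ∉ A, s j = t j) : ∀ j ∉ A, applyGate g s j = applyGate g t j := by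
  intro j hj
  cases g with
  | NOT k => by_cases hjk : j = k <;> simp_all [applyGate]
  | CNOT c k =>
    simp only [Gate.controls, Finset.disjoint_singleton_left] at hg
    by_cases hjk : j = k <;> simp_all [applyGate]
  | TOF c d k =>
    simp only [Gate.controls, Finset.disjoint_insert_left, Finset.disjoint_singleton_left] at hg
    by_cases hjk : j = k <;> simp_all [applyGate]

theorem evalCirc_congr_off {C : List Gate} {A : Finset ℕ} (hC : ∀ g ∈ C, Disjoint g.controls A)
    {s t : ℕ → Bool} (h : ∀ j ∉ A, s j = t j) : ∀ j ∉ A, evalCirc C s j = evalCirc C t j := by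
  induction C generalizing s t with
  | nil => exact h
  | cons g C ih =>
    exact ih (fun g' hg' => hC g' (List.mem_cons_of_mem _ hg'))
      (applyGate_congr_off (hC g List.mem_cons_self) h)

theorem evalCirc_uncompute_congr_off {C : List Gate} {A : Finset ℕ}
    (hC : ∀ g ∈ C, Disjoint g.controls A) {s t : ℕ → Bool} (h : ∀ j ∉ A, s j = t j) :
    ∀ j ∉ A, evalCirc (uncompute C A) s j = evalCirc C t j := by
  induction C generalizing s t with
  | nil => exact h
  | cons g C ih =>
    have hC' : ∀ g' ∈ C, Disjoint g'.controls A := fun g' hg' =>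
      hC g' (List.mem_cons_of_mem _ hg')
    by_cases hgA : g.target ∈ A
    · have hu : uncompute (g :: C) A = uncompute C A := by simp [uncompute, hgA]
      rw [hu]
      refine ih hC' fun j hj => ?_
      rw [h j hj, applyGate_of_target_ne (ne_of_mem_of_not_mem hgA hj)]
    · have hu : uncompute (g :: C) A = g :: uncompute C A := by simp [uncompute, hgA]
      rw [hu]
      exact ih hC' (applyGate_congr_off (hC g List.mem_cons_self) h)

theorem evalCirc_append_reverse_uncompute_of_notMem {C : List Gate} {A : Finset ℕ}
    (hw : circWf C) (hC : ∀ g ∈ C, Disjoint g.controls A) (s : ℕ → Bool) :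
    ∀ j ∉ A, evalCirc (C ++ (uncompute C A).reverse) s j = s j := by
  have hDC : ∀ g ∈ (uncompute C A).reverse, g ∈ C := fun g hg =>
    List.mem_of_mem_filter (List.mem_reverse.mp hg)
  intro j hj
  rw [evalCirc_append]
  set D := uncompute C A
  calc evalCirc D.reverse (evalCirc C s) j
      = evalCirc D.reverse (evalCirc D s) j :=
        evalCirc_congr_off (fun g hg => hC g (hDC g hg))
          (fun k hk => (evalCirc_uncompute_congr_off hC (fun _ _ => rfl) k hk).symm) j hj
    _ = s j := by
        rw [evalCirc_reverse_evalCirc (C := D) fun g hg => hw g (List.mem_of_mem_filter hg)]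

theorem evalCirc_append_reverse_uncompute_of_mem (C : List Gate) {A : Finset ℕ} (s : ℕ → Bool)
    {j : ℕ} (hj : j ∈ A) : evalCirc (C ++ (uncompute C A).reverse) s j = evalCirc C s j := by
  rw [evalCirc_append]
  refine evalCirc_of_forall_target_ne (fun g hg hgj => ?_) _
  have hgA := List.of_mem_filter (List.mem_reverse.mp hg)
  simp only [decide_eq_true_eq] at hgA
  exact hgA (hgj ▸ hj)

theorem BExp.eval_congr {B : BExp} {s t : ℕ → Bool} (h : ∀ j ∈ B.vars, s j = t j) :
    B.eval s = B.eval t := by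
  induction B with
  | bfalse | btrue => rfl
  | var j => exact h j (Finset.mem_singleton_self j)
  | bxor a b iha ihb | band a b iha ihb =>
    simp only [BExp.vars, Finset.mem_union] at h
    rw [BExp.eval, BExp.eval, iha fun j hj => h j (Or.inl hj), ihb fun j hj => h j (Or.inr hj)]
def BExp.numAncillas : BExp → ℕ
  | .bfalse | .btrue | .var _ => 0
  | .bxor a b => a.numAncillas + b.numAncillas
  | .band a b => a.numAncillas + b.numAncillas + 2

theorem compileBExp_snd (B : BExp) (i : ℕ) (H : ℕ → ℕ) :
    (compileBExp B i H).2 = fun n => H (n + B.numAncillas) := by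
  induction B generalizing i H with
  | bfalse | btrue | var => rfl
  | bxor a b iha ihb | band a b iha ihb =>
    simp only [compileBExp, BExp.numAncillas, iha, ihb]
    funext n; ring_nf

theorem compileBExp_bxor_fst (a b : BExp) (i : ℕ) (H : ℕ → ℕ) :
    (compileBExp (.bxor a b) i H).1 =
      (compileBExp a i H).1 ++ (compileBExp b i fun n => H (n + a.numAncillas)).1 := by
  simp only [compileBExp, compileBExp_snd]

theorem compileBExp_band_fst (a b : BExp) (i : ℕ) (H : ℕ → ℕ) :
    (compileBExp (.band a b) i H).1 =
      (compileBExp a (H 0) fun n => H (n + 1)).1 ++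
        (compileBExp b (H (a.numAncillas + 1)) fun n => H (n + (a.numAncillas + 2))).1 ++
        [.TOF (H 0) (H (a.numAncillas + 1)) i] := by
  simp only [compileBExp, compileBExp_snd, zero_add]
  congr 4
  funext n; ring_nf

theorem target_of_mem_compileBExp {B : BExp} {i : ℕ} {H : ℕ → ℕ} {g : Gate}
    (hg : g ∈ (compileBExp B i H).1) : g.target = i ∨ ∃ n < B.numAncillas, g.target = H n := by
  induction B generalizing i H with
  | bfalse => simp [compileBExp] at hg
  | btrue | var => simp only [compileBExp, List.mem_singleton] at hg; subst hg; exact Or.inl rfl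
  | bxor a b iha ihb =>
    rw [compileBExp_bxor_fst, List.mem_append] at hg
    rcases hg with hg | hg
    · exact (iha hg).imp_right fun ⟨n, hn, h⟩ => ⟨n, by simp only [BExp.numAncillas]; omega, h⟩
    · exact (ihb hg).imp_right fun ⟨n, hn, h⟩ =>
        ⟨n + a.numAncillas, by simp only [BExp.numAncillas]; omega, h⟩
  | band a b iha ihb =>
    rw [compileBExp_band_fst, List.mem_append, List.mem_append, List.mem_singleton] at hg
    rcases hg with (hg | hg) | rfl
    · refine .inr ?_
      rcases iha hg with h | ⟨n, hn, h⟩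
      · exact ⟨0, by simp only [BExp.numAncillas]; omega, h⟩
      · exact ⟨n + 1, by simp only [BExp.numAncillas]; omega, h⟩
    · refine .inr ?_
      rcases ihb hg with h | ⟨n, hn, h⟩
      · exact ⟨a.numAncillas + 1, by simp only [BExp.numAncillas]; omega, h⟩
      · exact ⟨n + (a.numAncillas + 2), by simp only [BExp.numAncillas]; omega, h⟩
    · exact .inl rfl

theorem controls_of_mem_compileBExp {B : BExp} {i : ℕ} {H : ℕ → ℕ} {g : Gate}
    (hg : g ∈ (compileBExp B i H).1) {c : ℕ} (hc : c ∈ g.controls) :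
    c ∈ B.vars ∨ ∃ n < B.numAncillas, c = H n := by
  induction B generalizing i H with
  | bfalse => simp [compileBExp] at hg
  | btrue =>
    simp only [compileBExp, List.mem_singleton] at hg; subst hg
    simp [Gate.controls] at hc
  | var j =>
    simp only [compileBExp, List.mem_singleton] at hg; subst hg
    exact .inl (by simpa [Gate.controls, BExp.vars] using hc)
  | bxor a b iha ihb =>
    rw [compileBExp_bxor_fst, List.mem_append] at hg
    simp only [BExp.vars, Finset.mem_union, BExp.numAncillas]
    rcases hg with hg | hg
    · rcases iha hg with h | ⟨n, hn, h⟩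
      · exact .inl (.inl h)
      · exact .inr ⟨n, by omega, h⟩
    · rcases ihb hg with h | ⟨n, hn, h⟩
      · exact .inl (.inr h)
      · exact .inr ⟨n + a.numAncillas, by omega, h⟩
  | band a b iha ihb =>
    rw [compileBExp_band_fst, List.mem_append, List.mem_append, List.mem_singleton] at hg
    simp only [BExp.vars, Finset.mem_union, BExp.numAncillas]
    rcases hg with (hg | hg) | rfl
    · rcases iha hg with h | ⟨n, hn, h⟩
      · exact .inl (.inl h)
      · exact .inr ⟨n + 1, by omega, h⟩
    · rcases ihb hg with h | ⟨n, hn, h⟩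
      · exact .inl (.inr h)
      · exact .inr ⟨n + (a.numAncillas + 2), by omega, h⟩
    · simp only [Gate.controls, Finset.mem_insert, Finset.mem_singleton] at hc
      rcases hc with rfl | rfl
      · exact .inr ⟨0, Nat.zero_lt_succ _, rfl⟩
      · exact .inr ⟨a.numAncillas + 1, by omega, rfl⟩

theorem circWf_compileBExp {B : BExp} {i : ℕ} {H : ℕ → ℕ} (hinj : Function.Injective H)
    (hHB : ∀ n, H n ∉ B.vars) (hHi : ∀ n, H n ≠ i) (hiB : i ∉ B.vars) :
    circWf (compileBExp B i H).1 := by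
  induction B generalizing i H with
  | bfalse => simp [circWf, compileBExp]
  | btrue => simp [circWf, compileBExp, Gate.wf]
  | var j =>
    simp only [BExp.vars, Finset.mem_singleton] at hiB
    simpa [circWf, compileBExp, Gate.wf] using Ne.symm hiB
  | bxor a b iha ihb =>
    simp only [BExp.vars, Finset.mem_union, not_or, forall_and] at hHB hiB
    intro g hg
    rw [compileBExp_bxor_fst, List.mem_append] at hg
    rcases hg with hg | hg
    · exact iha hinj hHB.1 hHi hiB.1 g hg
    · exact ihb (hinj.comp_add_right _) (fun n => hHB.2 _) (fun n => hHi _) hiB.2 g hg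
  | band a b iha ihb =>
    simp only [BExp.vars, Finset.mem_union, not_or, forall_and] at hHB
    intro g hg
    rw [compileBExp_band_fst, List.mem_append, List.mem_append, List.mem_singleton] at hg
    rcases hg with (hg | hg) | rfl
    · exact iha (hinj.comp_add_right _) (fun n => hHB.1 _)
        (fun n => hinj.ne n.succ_ne_zero) (hHB.1 0) g hg
    · exact ihb (hinj.comp_add_right _) (fun n => hHB.2 _)
        (fun n => hinj.ne (by omega : n + (a.numAncillas + 2) ≠ a.numAncillas + 1)) (hHB.2 _) g hg
    · exact ⟨hinj.ne (by omega), hHi 0, hHi _⟩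

theorem evalCirc_compileBExp_of_ne {B : BExp} {i j : ℕ} {H : ℕ → ℕ} (hji : j ≠ i)
    (hjH : ∀ n < B.numAncillas, H n ≠ j) (s : ℕ → Bool) :
    evalCirc (compileBExp B i H).1 s j = s j := by
  refine evalCirc_of_forall_target_ne (fun g hg => ?_) s
  rcases target_of_mem_compileBExp hg with h | ⟨n, hn, h⟩ <;> rw [h]
  exacts [hji.symm, hjH n hn]

def BExp.CompilesCorrectly (B : BExp) : Prop :=
  ∀ ⦃i : ℕ⦄ ⦃H : ℕ → ℕ⦄ ⦃s : ℕ → Bool⦄, Function.Injective H → (∀ n, H n ∉ B.vars) →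
    (∀ n, H n ≠ i) → i ∉ B.vars → (∀ n, s (H n) = false) →
    evalCirc (compileBExp B i H).1 s i = xor (s i) (B.eval s)

theorem BExp.CompilesCorrectly.bxor {a b : BExp} (iha : a.CompilesCorrectly)
    (ihb : b.CompilesCorrectly) : (BExp.bxor a b).CompilesCorrectly := by
  intro i H s hinj hHB hHi hiB hzero
  simp only [BExp.vars, Finset.mem_union, not_or, forall_and] at hHB hiB
  set s₁ := evalCirc (compileBExp a i H).1 s
  have hs₁_i : s₁ i = xor (s i) (a.eval s) := iha hinj hHB.1 hHi hiB.1 hzero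
  have hs₁_b : ∀ j ∈ b.vars, s₁ j = s j := fun j hj =>
    evalCirc_compileBExp_of_ne (ne_of_mem_of_not_mem hj hiB.2)
      (fun n _ => (ne_of_mem_of_not_mem hj (hHB.2 n)).symm) s
  have hs₁_zero : ∀ n, s₁ (H (n + a.numAncillas)) = false := fun n =>
    (evalCirc_compileBExp_of_ne (hHi _) (fun m hm => hinj.ne (by omega)) s).trans (hzero _)
  rw [compileBExp_bxor_fst, evalCirc_append,
    ihb (hinj.comp_add_right _) (fun n => hHB.2 _) (fun n => hHi _) hiB.2 hs₁_zero, hs₁_i,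
    BExp.eval_congr hs₁_b, BExp.eval, Bool.xor_assoc]

theorem BExp.CompilesCorrectly.band {a b : BExp} (iha : a.CompilesCorrectly)
    (ihb : b.CompilesCorrectly) : (BExp.band a b).CompilesCorrectly := by
  intro i H s hinj hHB hHi _ hzero
  simp only [BExp.vars, Finset.mem_union, not_or, forall_and] at hHB
  set s₁ := evalCirc (compileBExp a (H 0) fun n => H (n + 1)).1 s
  set s₂ := evalCirc (compileBExp b (H (a.numAncillas + 1))
    fun n => H (n + (a.numAncillas + 2))).1 s₁
  have hs₁_eq : ∀ j, j ≠ H 0 → (∀ n < a.numAncillas, H (n + 1) ≠ j) → s₁ j = s j :=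
    fun j hj hjH => evalCirc_compileBExp_of_ne hj hjH s
  have hs₁_a : s₁ (H 0) = a.eval s :=
    (iha (hinj.comp_add_right _) (fun n => hHB.1 _) (fun n => hinj.ne n.succ_ne_zero) (hHB.1 0)
      (fun n => hzero _)).trans (by rw [hzero, Bool.false_xor])
  have hs₁_b : ∀ j ∈ b.vars, s₁ j = s j := fun j hj =>
    hs₁_eq j (ne_of_mem_of_not_mem hj (hHB.2 0))
      (fun n _ => (ne_of_mem_of_not_mem hj (hHB.2 _)).symm)
  have hs₁_zero : ∀ n, a.numAncillas < n → s₁ (H n) = false := fun n hn =>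
    (hs₁_eq _ (hinj.ne (by omega)) (fun m hm => hinj.ne (by omega))).trans (hzero _)
  have hs₂_eq : ∀ j, j ≠ H (a.numAncillas + 1) →
      (∀ n < b.numAncillas, H (n + (a.numAncillas + 2)) ≠ j) → s₂ j = s₁ j :=
    fun j hj hjH => evalCirc_compileBExp_of_ne hj hjH s₁
  have hs₂_a : s₂ (H 0) = a.eval s :=
    (hs₂_eq _ (hinj.ne (by omega)) (fun n _ => hinj.ne (by omega))).trans hs₁_a
  have hs₂_b : s₂ (H (a.numAncillas + 1)) = b.eval s :=
    (ihb (hinj.comp_add_right _) (fun n => hHB.2 _)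
      (fun n => hinj.ne (by omega : n + (a.numAncillas + 2) ≠ a.numAncillas + 1)) (hHB.2 _)
      (fun n => hs₁_zero _ (by omega))).trans
      (by rw [hs₁_zero _ (by omega), Bool.false_xor, BExp.eval_congr hs₁_b])
  have hs₂_i : s₂ i = s i :=
    (hs₂_eq _ (hHi _).symm (fun n _ => hHi _)).trans (hs₁_eq _ (hHi _).symm (fun n _ => hHi _))
  rw [compileBExp_band_fst, evalCirc_append, evalCirc_append]
  change Function.update s₂ i (xor (s₂ (H 0) && s₂ (H (a.numAncillas + 1))) (s₂ i)) i = _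
  rw [Function.update_self, hs₂_a, hs₂_b, hs₂_i, BExp.eval, Bool.xor_comm]

theorem BExp.compilesCorrectly (B : BExp) : B.CompilesCorrectly := by
  induction B with
  | bfalse => intro i H s; simp [compileBExp, evalCirc, BExp.eval]
  | btrue => intro i H s; simp [compileBExp, evalCirc, BExp.eval, applyGate]
  | var j => intro i H s; simp [compileBExp, evalCirc, BExp.eval, applyGate, Bool.xor_comm]
  | bxor a b iha ihb => exact iha.bxor ihb
  | band a b iha ihb => exact iha.band ihb

theorem compile_with_cleanup (B : BExp) (i : ℕ) (H : ℕ → ℕ) (s : ℕ → Bool)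
    (hinj : Function.Injective H)
    (hHB : ∀ n, H n ∉ B.vars) (hHi : ∀ n, H n ≠ i) (hiB : i ∉ B.vars)
    (hzero : ∀ n, s (H n) = false) :
    (∀ j, j ≠ i →
      evalCirc ((compileBExp B i H).1 ++
        (uncompute (compileBExp B i H).1 {i}).reverse) s j = s j) ∧
    evalCirc ((compileBExp B i H).1 ++
        (uncompute (compileBExp B i H).1 {i}).reverse) s i
      = xor (s i) (B.eval s) ∧
    (∀ n, evalCirc ((compileBExp B i H).1 ++
        (uncompute (compileBExp B i H).1 {i}).reverse) s (H n) = false) := by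
  set C := (compileBExp B i H).1
  have hctrl : ∀ g ∈ C, Disjoint g.controls {i} := fun g hg =>
    Finset.disjoint_singleton_right.mpr fun hi =>
      (controls_of_mem_compileBExp hg hi).elim hiB fun ⟨n, _, h⟩ => hHi n h.symm
  have hoff : ∀ j, j ≠ i → evalCirc (C ++ (uncompute C {i}).reverse) s j = s j :=
    fun j hj => evalCirc_append_reverse_uncompute_of_notMem
      (circWf_compileBExp hinj hHB hHi hiB) hctrl s j (Finset.notMem_singleton.mpr hj)
  refine ⟨hoff, ?_, fun n => (hoff _ (hHi n)).trans (hzero n)⟩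
  rw [evalCirc_append_reverse_uncompute_of_mem C s (Finset.mem_singleton_self i),
    B.compilesCorrectly hinj hHB hHi hiB hzero]
end
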